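/- Let K be a field of characteristic 0 and let S = K[x,y,z] be graded by deg(x)=5, deg(y)=103, deg(z)=169. Then dim_K S_{887} = 6 and [𝔭_K(5,103,169)^{(3)}]_{887} = 0. -/

import Mathlib

open MvPolynomial

noncomputable section

/-- The weight function assigning degrees `a, b, c` to the variables `x, y, z`. -/
def wt (a b c : ℕ) : Fin 3 → ℕ := ![a, b, c]

/-- The `K`-algebra map `K[x,y,z] → K[T]`, `x ↦ T^a`, `y ↦ T^b`, `z ↦ T^c`. -/
def toPoly (K : Type*) [CommRing K] (a b c : ℕ) :
    MvPolynomial (Fin 3) K →ₐ[K] Polynomial K :=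
  aeval ![Polynomial.X ^ a, Polynomial.X ^ b, Polynomial.X ^ c]

/-- The space monomial prime `𝔭_K(a,b,c)`. -/
def pIdeal (K : Type*) [CommRing K] (a b c : ℕ) : Ideal (MvPolynomial (Fin 3) K) :=
  RingHom.ker (toPoly K a b c)

instance pIdeal_isPrime (K : Type*) [Field K] (a b c : ℕ) : (pIdeal K a b c).IsPrime :=
  RingHom.ker_isPrime _

/-- The `n`-th symbolic power `Q^{(n)} = Q^n A_Q ∩ A` of a prime ideal. -/
def symbPow {A : Type*} [CommRing A] (Q : Ideal A) [Q.IsPrime] (n : ℕ) : Ideal A :=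
  Ideal.comap (algebraMap A (Localization.AtPrime Q))
    (Ideal.map (algebraMap A (Localization.AtPrime Q)) (Q ^ n))

/-- The symbolic Rees algebra `A[Qt, Q^{(2)}t^2, …] ⊆ A[t]`. -/
def symbolicRees {A : Type*} [CommRing A] (Q : Ideal A) [Q.IsPrime] :
    Subalgebra A (Polynomial A) :=
  Algebra.adjoin A
    (⋃ n : ℕ, (fun p => Polynomial.C p * Polynomial.X ^ n) '' ((symbPow Q n : Ideal A) : Set A))

/-- The degree-`d` homogeneous component `[J]_d` of an ideal `J ⊆ K[x,y,z]`,
as a `K`-subspace. -/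
def gpiece (K : Type*) [CommRing K] (a b c : ℕ) (J : Ideal (MvPolynomial (Fin 3) K))
    (d : ℕ) : Submodule K (MvPolynomial (Fin 3) K) :=
  (Submodule.restrictScalars K J) ⊓ (weightedHomogeneousSubmodule K (wt a b c) d)

end

/-!
If `f ∈ 𝔭^{(3)}` then `s f ∈ 𝔭^3` for some `s ∉ 𝔭`. A derivation maps `I^{n+1}` into `I^n`, and
this passes to symbolic powers of a prime, so `f` and all its partial derivatives of order `≤ 2`
lie in `𝔭`; in particular they vanish at the point `(1,1,1)` of the monomial curve.

The degree-`887` part of `S` has the six monomials `x^a y^b z^c` with `5a + 103b + 169c = 887`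
as a basis. Evaluating `f, ∂ₓf, ∂_y f, ∂ₓ²f, ∂ₓ∂_y f, ∂_y² f` at `(1,1,1)` on these monomials
gives a `6 × 6` integer matrix of determinant `-(2·13⁴)²`, which is invertible in characteristic
`0`, so the only element of degree `887` with all these values zero is `0`.
-/

section SymbolicPower

variable {A : Type*} [CommRing A] (Q : Ideal A) [Q.IsPrime]

theorem mem_symbPow_iff {n : ℕ} {f : A} : f ∈ symbPow Q n ↔ ∃ s ∉ Q, s * f ∈ Q ^ n := by
  simp_rw [symbPow, Ideal.mem_comap, IsLocalization.mem_map_algebraMap_iff Q.primeCompl]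
  constructor
  · rintro ⟨⟨⟨a, ha⟩, s⟩, h⟩
    rw [← map_mul, IsLocalization.eq_iff_exists Q.primeCompl] at h
    obtain ⟨c, hc⟩ := h
    refine ⟨c * s, (c * s).2, ?_⟩
    have : (c : A) * s * f = c * a := by rw [← hc]; ring
    simpa [this] using Ideal.mul_mem_left _ _ ha
  · rintro ⟨s, hs, hsf⟩
    exact ⟨⟨⟨s * f, hsf⟩, ⟨s, hs⟩⟩, by simp [mul_comm]⟩

theorem symbPow_one : symbPow Q 1 = Q := by
  ext f
  rw [mem_symbPow_iff, pow_one]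
  refine ⟨fun ⟨s, hs, hsf⟩ => (Ideal.IsPrime.mem_or_mem ‹_› hsf).resolve_left hs,
    fun hf => ⟨1, Q.one_notMem, by simpa⟩⟩

theorem symbPow_anti : Antitone (symbPow Q) := fun _ _ h =>
  Ideal.comap_mono (Ideal.map_mono (Ideal.pow_le_pow_right h))

end SymbolicPower

namespace Derivation

variable {R A : Type*} [CommRing R] [CommRing A] [Algebra R A] (D : Derivation R A A)

theorem apply_mem_pow (I : Ideal A) {n : ℕ} {f : A} (hf : f ∈ I ^ (n + 1)) : D f ∈ I ^ n := by
  induction n generalizing f with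
  | zero => simp
  | succ n ih =>
    rw [pow_succ] at hf
    refine Submodule.mul_induction_on hf (fun a ha b hb => ?_) (fun x y hx hy => ?_)
    · rw [leibniz, smul_eq_mul, smul_eq_mul, mul_comm b]
      exact add_mem (Ideal.mul_mem_right _ _ ha) (pow_succ I n ▸ Ideal.mul_mem_mul (ih ha) hb)
    · rw [map_add]
      exact add_mem hx hy

theorem apply_mem_symbPow (Q : Ideal A) [Q.IsPrime] {n : ℕ} {f : A}
    (hf : f ∈ symbPow Q (n + 1)) : D f ∈ symbPow Q n := by
  obtain ⟨s, hs, hsf⟩ := (mem_symbPow_iff Q).1 hf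
  refine (mem_symbPow_iff Q).2 ⟨s * s, Ideal.IsPrime.mul_notMem ‹_› hs hs, ?_⟩
  -- `s² D f = s D (s f) - D s (s f)`, and both `D (s f)` and `s f` lie in `Q ^ n`.
  have h₁ : s * D (s * f) ∈ Q ^ n := Ideal.mul_mem_left _ _ (D.apply_mem_pow Q hsf)
  have h₂ : D s * (s * f) ∈ Q ^ n :=
    Ideal.mul_mem_left _ _ (Ideal.pow_le_pow_right n.le_succ hsf)
  convert sub_mem h₁ h₂ using 1
  rw [leibniz, smul_eq_mul, smul_eq_mul]
  ring

end Derivation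

theorem MvPolynomial.eq_sum_monomial_of_support_subset {R σ ι : Type*} [CommSemiring R]
    [Fintype ι] {e : ι → σ →₀ ℕ} (he : Function.Injective e) {f : MvPolynomial σ R}
    (hf : ↑f.support ⊆ Set.range e) : f = ∑ i, monomial (e i) (coeff (e i) f) := by
  classical
  have hsub : f.support ⊆ Finset.univ.image e := fun m hm => by simpa using hf hm
  calc f = ∑ m ∈ f.support, monomial m (coeff m f) := f.as_sum
    _ = ∑ m ∈ Finset.univ.image e, monomial m (coeff m f) :=
      Finset.sum_subset hsub fun m _ hm => by rw [notMem_support_iff.1 hm, map_zero]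
    _ = ∑ i, monomial (e i) (coeff (e i) f) := Finset.sum_image fun i _ j _ h => he h

section Jet

variable {K : Type*} [CommRing K]

theorem eval_one_eq_zero_of_mem_pIdeal {a b c : ℕ} {f : MvPolynomial (Fin 3) K}
    (hf : f ∈ pIdeal K a b c) : eval 1 f = 0 := by
  have hcomp : (Polynomial.aeval (1 : K)).comp (toPoly K a b c) = aeval 1 := by
    rw [toPoly, comp_aeval]
    congr 1
    funext i
    fin_cases i <;> simp
  have := congrArg (Polynomial.aeval (1 : K)) (show toPoly K a b c f = 0 from hf)
  rw [← AlgHom.comp_apply, hcomp, map_zero] at this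
  exact this

noncomputable def jetAtOne : MvPolynomial (Fin 3) K →ₗ[K] Fin 6 → K :=
  LinearMap.pi ![(aeval 1).toLinearMap,
    (aeval 1).toLinearMap ∘ₗ (pderiv 0).toLinearMap,
    (aeval 1).toLinearMap ∘ₗ (pderiv 1).toLinearMap,
    (aeval 1).toLinearMap ∘ₗ (pderiv 0).toLinearMap ∘ₗ (pderiv 0).toLinearMap,
    (aeval 1).toLinearMap ∘ₗ (pderiv 1).toLinearMap ∘ₗ (pderiv 0).toLinearMap,
    (aeval 1).toLinearMap ∘ₗ (pderiv 1).toLinearMap ∘ₗ (pderiv 1).toLinearMap]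

theorem jetAtOne_apply (f : MvPolynomial (Fin 3) K) :
    jetAtOne f = ![eval 1 f, eval 1 (pderiv 0 f), eval 1 (pderiv 1 f),
      eval 1 (pderiv 0 (pderiv 0 f)), eval 1 (pderiv 1 (pderiv 0 f)),
      eval 1 (pderiv 1 (pderiv 1 f))] := by
  ext r
  fin_cases r <;> rfl

end Jet

theorem jetAtOne_eq_zero_of_mem_symbPow {K : Type*} [Field K] {a b c : ℕ}
    {f : MvPolynomial (Fin 3) K} (hf : f ∈ symbPow (pIdeal K a b c) 3) : jetAtOne f = 0 := by
  set P := pIdeal K a b c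
  have hP {g} (hg : g ∈ symbPow P 1) : eval 1 g = 0 :=
    eval_one_eq_zero_of_mem_pIdeal (symbPow_one P ▸ hg)
  have h₀ : f ∈ symbPow P 1 := symbPow_anti P (by norm_num) hf
  have h₁ (i : Fin 3) : pderiv i f ∈ symbPow P 2 := (pderiv i).apply_mem_symbPow P hf
  have h₁' (i : Fin 3) : pderiv i f ∈ symbPow P 1 := symbPow_anti P (by norm_num) (h₁ i)
  have h₂ (i j : Fin 3) : pderiv j (pderiv i f) ∈ symbPow P 1 :=
    (pderiv j).apply_mem_symbPow P (h₁ i)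
  simp only [jetAtOne_apply, Matrix.cons_eq_zero_iff, Matrix.zero_empty, and_true]
  exact ⟨hP h₀, hP (h₁' 0), hP (h₁' 1), hP (h₂ 0 0), hP (h₂ 0 1), hP (h₂ 1 1)⟩

section Degree887

noncomputable def expVec (a b c : ℕ) : Fin 3 →₀ ℕ := Finsupp.equivFunOnFinite.symm ![a, b, c]

@[simp] theorem expVec_apply (a b c : ℕ) (i : Fin 3) : expVec a b c i = ![a, b, c] i := rfl

theorem expVec_inj {a b c a' b' c' : ℕ} :
    expVec a b c = expVec a' b' c' ↔ a = a' ∧ b = b' ∧ c = c' := by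
  simp [expVec]

theorem weight_wt (p q r : ℕ) (m : Fin 3 →₀ ℕ) :
    Finsupp.weight (wt p q r) m = p * m 0 + q * m 1 + r * m 2 := by
  simp [Finsupp.weight_apply, Finsupp.sum_fintype, Fin.sum_univ_three, wt, mul_comm]

noncomputable def exponents887 : Fin 6 → Fin 3 →₀ ℕ :=
  ![expVec 95 4 0, expVec 123 1 1, expVec 20 6 1, expVec 48 3 2, expVec 76 0 3, expVec 1 2 4]

theorem exponents887_injective : Function.Injective exponents887 := by
  intro k l h
  fin_cases k <;> fin_cases l <;> simp_all [exponents887, expVec_inj]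

theorem expVec_mem_range_exponents887_iff {a b c : ℕ} :
    expVec a b c ∈ Set.range exponents887 ↔ 5 * a + 103 * b + 169 * c = 887 := by
  simp only [exponents887, Matrix.range_cons, Matrix.range_empty, Set.union_empty,
    Set.union_singleton, Set.union_insert, Set.mem_insert_iff, expVec_inj, Set.mem_singleton_iff]
  constructor
  · omega
  · intro h
    have : c ≤ 5 := by omega
    have : b ≤ 8 := by omega
    interval_cases c <;> interval_cases b <;> omega

theorem weight_eq_887_iff (m : Fin 3 →₀ ℕ) :
    Finsupp.weight (wt 5 103 169) m = 887 ↔ m ∈ Set.range exponents887 := by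
  have hm : m = expVec (m 0) (m 1) (m 2) := by
    ext i
    fin_cases i <;> rfl
  rw [weight_wt, hm, expVec_mem_range_exponents887_iff]
  simp

theorem weightedHomogeneousSubmodule_887 (K : Type*) [CommSemiring K] :
    weightedHomogeneousSubmodule K (wt 5 103 169) 887 =
      restrictSupport K (Set.range exponents887) := by
  rw [weightedHomogeneousSubmodule_eq_finsupp_supported, restrictSupport]
  congr
  ext m
  exact weight_eq_887_iff m

theorem finrank_weightedHomogeneousSubmodule_887 (K : Type*) [Field K] :
    Module.finrank K (weightedHomogeneousSubmodule K (wt 5 103 169) 887) = 6 := by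
  rw [weightedHomogeneousSubmodule_887, Module.finrank_eq_card_basis (basisRestrictSupport K _),
    Set.card_range_of_injective exponents887_injective, Fintype.card_fin]

/-- Column `k` is `(1, a, b, a(a-1), ab, b(b-1))` for `exponents887 k = (a, b, c)`. -/
def jetMatrix887 : Matrix (Fin 6) (Fin 6) ℤ :=
  !![1, 1, 1, 1, 1, 1;
    95, 123, 20, 48, 76, 1;
    4, 1, 6, 3, 0, 2;
    8930, 15006, 380, 2256, 5700, 0;
    380, 123, 120, 144, 0, 2;
    12, 0, 30, 6, 0, 2]

theorem det_jetMatrix887 : jetMatrix887.det = -57122 ^ 2 := by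
  simp [jetMatrix887, Matrix.det_succ_row_zero, Fin.sum_univ_succ, Fin.succAbove]

theorem jetAtOne_monomial_exponents887 {K : Type*} [CommRing K] (k : Fin 6) (c : K) :
    jetAtOne (monomial (exponents887 k) c) = c • fun r => (jetMatrix887 r k : K) := by
  ext r
  fin_cases k <;> fin_cases r <;>
    simp [jetAtOne_apply, pderiv_monomial, eval_monomial, exponents887, jetMatrix887] <;> ring

theorem eq_zero_of_mem_887_of_jetAtOne_eq_zero {K : Type*} [Field K] [CharZero K]
    {f : MvPolynomial (Fin 3) K} (hf : f ∈ weightedHomogeneousSubmodule K (wt 5 103 169) 887)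
    (hjet : jetAtOne f = 0) : f = 0 := by
  set c : Fin 6 → K := fun k => coeff (exponents887 k) f
  rw [weightedHomogeneousSubmodule_887, mem_restrictSupport_iff] at hf
  have hsum : f = ∑ k, monomial (exponents887 k) (c k) :=
    eq_sum_monomial_of_support_subset exponents887_injective hf
  have hdet : ((Int.castRingHom K).mapMatrix jetMatrix887).det ≠ 0 := by
    rw [← RingHom.map_det, det_jetMatrix887]
    norm_num
  have hc : c = 0 := by
    refine Matrix.eq_zero_of_mulVec_eq_zero hdet ?_
    rw [← hjet, hsum, map_sum]
    ext r
    simp [jetAtOne_monomial_exponents887, Matrix.mulVec, dotProduct, mul_comm]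
  rw [hsum]
  simp [hc]

end Degree887

/-- for char-`0` `K`, with `deg x = 5`, `deg y = 103`,
`deg z = 169`, one has `dim_K S_{887} = 6` and `[𝔭_K(5,103,169)^{(3)}]_{887} = 0`. -/
theorem statement15 (K : Type*) [Field K] [CharZero K] :
    Module.finrank K (weightedHomogeneousSubmodule K (wt 5 103 169) 887) = 6 ∧
    gpiece K 5 103 169 (symbPow (pIdeal K 5 103 169) 3) 887 = ⊥ := by
  refine ⟨finrank_weightedHomogeneousSubmodule_887 K, eq_bot_iff.2 ?_⟩
  rintro f ⟨hf, hdeg⟩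
  exact (Submodule.mem_bot K).2
    (eq_zero_of_mem_887_of_jetAtOne_eq_zero hdeg (jetAtOne_eq_zero_of_mem_symbPow hf))
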